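/- arXiv:1309.1246 — 2 statements merged into one kernel-verified Lean document; each statement's English description precedes it below -/
import Mathlib

section
/- The function Z(θ₁, θ₂) = ∫₀^{2π} exp(θ₁ cos t + θ₂ sin t) dt satisfies θ₂ · ∂Z/∂θ₁ − θ₁ · ∂Z/∂θ₂ = 0, i.e., Z is annihilated by the operator θ₂∂₁ − θ₁∂₂. -/
/-! Differentiating under the integral sign, `θ₂ ∂₁Z − θ₁ ∂₂Z` is the integral over `[0, 2π]` of
`(θ₂ cos t − θ₁ sin t) exp (θ₁ cos t + θ₂ sin t)`, the `t`-derivative of the `2π`-periodic function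
`exp (θ₁ cos t + θ₂ sin t)`; so it vanishes. -/

noncomputable def Z (θ₁ θ₂ : ℝ) : ℝ :=
  ∫ t in (0)..(2 * Real.pi), Real.exp (θ₁ * Real.cos t + θ₂ * Real.sin t)

open MeasureTheory Real Set Function

theorem intervalIntegral.hasDerivAt_integral_of_continuous_deriv
    {E : Type*} [NormedAddCommGroup E] [NormedSpace ℝ E] {F F' : ℝ → ℝ → E} {a b : ℝ}
    (hF : ∀ x, Continuous (F x)) (hF' : Continuous (uncurry F'))
    (hderiv : ∀ x t, HasDerivAt (F · t) (F' x t) x) (x₀ : ℝ) :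
    HasDerivAt (fun x => ∫ t in a..b, F x t) (∫ t in a..b, F' x₀ t) x₀ := by
  obtain ⟨C, hC⟩ := ((isCompact_closedBall x₀ 1).prod isCompact_uIcc).exists_bound_of_continuousOn
    hF'.continuousOn
  exact (hasDerivAt_integral_of_dominated_loc_of_deriv_le (bound := fun _ => C)
    (Metric.ball_mem_nhds x₀ one_pos) (.of_forall fun x => (hF x).aestronglyMeasurable)
    ((hF x₀).intervalIntegrable a b)
    (hF'.comp (continuous_const.prodMk continuous_id)).aestronglyMeasurable
    (.of_forall fun t ht x hx => hC (x, t) ⟨Metric.ball_subset_closedBall hx, uIoc_subset_uIcc ht⟩)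
    intervalIntegrable_const (.of_forall fun t _ x _ => hderiv x t)).2

theorem hasDerivAt_Z_fst (θ₁ θ₂ : ℝ) :
    HasDerivAt (fun v => Z v θ₂)
      (∫ t in (0)..(2 * π), cos t * exp (θ₁ * cos t + θ₂ * sin t)) θ₁ :=
  intervalIntegral.hasDerivAt_integral_of_continuous_deriv
    (a := 0) (b := 2 * π) (F := fun x t => exp (x * cos t + θ₂ * sin t))
    (F' := fun x t => cos t * exp (x * cos t + θ₂ * sin t)) (by fun_prop) (by fun_prop)
    (fun _ t =>
      ((hasDerivAt_mul_const (cos t)).add_const (θ₂ * sin t)).exp.congr_deriv (mul_comm _ _)) θ₁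

theorem hasDerivAt_Z_snd (θ₁ θ₂ : ℝ) :
    HasDerivAt (fun v => Z θ₁ v)
      (∫ t in (0)..(2 * π), sin t * exp (θ₁ * cos t + θ₂ * sin t)) θ₂ :=
  intervalIntegral.hasDerivAt_integral_of_continuous_deriv
    (a := 0) (b := 2 * π) (F := fun x t => exp (θ₁ * cos t + x * sin t))
    (F' := fun x t => sin t * exp (θ₁ * cos t + x * sin t)) (by fun_prop) (by fun_prop)
    (fun _ t =>
      ((hasDerivAt_mul_const (sin t)).const_add (θ₁ * cos t)).exp.congr_deriv (mul_comm _ _)) θ₂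

theorem hasDerivAt_exp_cos_sin (θ₁ θ₂ t : ℝ) :
    HasDerivAt (fun t => exp (θ₁ * cos t + θ₂ * sin t))
      ((θ₂ * cos t - θ₁ * sin t) * exp (θ₁ * cos t + θ₂ * sin t)) t := by
  have hexponent : HasDerivAt (fun t => θ₁ * cos t + θ₂ * sin t) (θ₂ * cos t - θ₁ * sin t) t :=
    (((hasDerivAt_cos t).const_mul θ₁).add ((hasDerivAt_sin t).const_mul θ₂)).congr_deriv
      (by ring)
  exact hexponent.exp.congr_deriv (mul_comm _ _)

theorem integral_deriv_exp_cos_sin_eq_zero (θ₁ θ₂ : ℝ) :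
    ∫ t in (0)..(2 * π), (θ₂ * cos t - θ₁ * sin t) * exp (θ₁ * cos t + θ₂ * sin t) = 0 := by
  rw [intervalIntegral.integral_eq_sub_of_hasDerivAt (fun t _ => hasDerivAt_exp_cos_sin θ₁ θ₂ t)
    (Continuous.intervalIntegrable (by fun_prop) _ _)]
  simp

theorem stmt_1 (θ₁ θ₂ : ℝ) :
    θ₂ * deriv (fun v => Z v θ₂) θ₁ - θ₁ * deriv (fun v => Z θ₁ v) θ₂ = 0 := by
  rw [(hasDerivAt_Z_fst θ₁ θ₂).deriv, (hasDerivAt_Z_snd θ₁ θ₂).deriv,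
    ← intervalIntegral.integral_const_mul, ← intervalIntegral.integral_const_mul,
    ← intervalIntegral.integral_sub (Continuous.intervalIntegrable (by fun_prop) _ _)
      (Continuous.intervalIntegrable (by fun_prop) _ _)]
  refine (intervalIntegral.integral_congr fun t _ => ?_).trans
    (integral_deriv_exp_cos_sin_eq_zero θ₁ θ₂)
  ring
end

section
/- With c̄² + s̄² < 1, the function ℓ(θ₁, θ₂) = −c̄θ₁ − s̄θ₂ + log Z(θ₁, θ₂), where Z(θ₁, θ₂) = ∫₀^{2π} exp(θ₁ cos t + θ₂ sin t) dt, tends to +∞ as ‖(θ₁, θ₂)‖ → ∞; hence ℓ attains a global minimum on ℝ². -/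
/-! Writing `(θ₁, θ₂) = r (cos φ, sin φ)`, the exponent in `Z` is `r cos (t - φ)`, which is at
least `r cos δ` on an arc of length `2δ` around `φ`; hence `log Z ≥ log (2δ) + r cos δ`. The linear
term is at least `-‖(c̄, s̄)‖ r` by Cauchy–Schwarz, so for `‖(c̄, s̄)‖ < cos δ` the function grows
linearly in `r`, and being continuous it attains its minimum. -/

open Real Filter Set MeasureTheory intervalIntegral

lemma mul_cos_add_mul_sin_eq_norm_mul_cos_sub_arg (a b t : ℝ) :
    a * cos t + b * sin t = ‖(⟨a, b⟩ : ℂ)‖ * cos (t - Complex.arg ⟨a, b⟩) := by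
  rw [cos_sub]
  linear_combination (cos t) * (Complex.norm_mul_cos_arg ⟨a, b⟩).symm
    + (sin t) * (Complex.norm_mul_sin_arg ⟨a, b⟩).symm

lemma mul_add_mul_le_norm_mul_norm (a b x y : ℝ) :
    a * x + b * y ≤ ‖(⟨a, b⟩ : ℂ)‖ * ‖(⟨x, y⟩ : ℂ)‖ := by
  simpa [Complex.inner, mul_comm] using real_inner_le_norm (⟨a, b⟩ : ℂ) ⟨x, y⟩

lemma Function.Periodic.mul_le_intervalIntegral {f : ℝ → ℝ} {T a L m : ℝ}
    (hf : Function.Periodic f T) (hfi : IntervalIntegrable f volume a (a + T))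
    (hf0 : ∀ t, 0 ≤ f t) (hL : 0 ≤ L) (hLT : L ≤ T) (hm : ∀ t ∈ Icc a (a + L), m ≤ f t) :
    m * L ≤ ∫ t in 0..T, f t :=
  calc m * L = ∫ _ in a..a + L, m := by simp [mul_comm]
    _ ≤ ∫ t in a..a + L, f t :=
      integral_mono_on (by linarith) intervalIntegrable_const
        (hfi.mono_set (uIcc_subset_uIcc_left (mem_uIcc_of_le (by linarith) (by linarith)))) hm
    _ ≤ ∫ t in a..a + T, f t :=
      integral_mono_interval le_rfl (by linarith) (by linarith)
        (Eventually.of_forall hf0) hfi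
    _ = ∫ t in 0..T, f t := by simpa using hf.intervalIntegral_add_eq a 0

lemma exp_cos_mul_norm_mul_le_Z {δ : ℝ} (hδ0 : 0 ≤ δ) (hδπ : δ ≤ π) (θ₁ θ₂ : ℝ) :
    exp (cos δ * ‖(⟨θ₁, θ₂⟩ : ℂ)‖) * (2 * δ) ≤ Z θ₁ θ₂ := by
  set φ := Complex.arg ⟨θ₁, θ₂⟩
  have hperiodic : Function.Periodic (fun t => exp (θ₁ * cos t + θ₂ * sin t)) (2 * π) := by
    intro t; simp [cos_add_two_pi, sin_add_two_pi]
  refine hperiodic.mul_le_intervalIntegral (a := φ - δ)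
    (Continuous.intervalIntegrable (by fun_prop) _ _)
    (fun t => (exp_pos _).le) (by linarith) (by linarith) fun t ht => ?_
  have hdist : |t - φ| ≤ δ := abs_sub_le_iff.2 ⟨by linarith [ht.2], by linarith [ht.1]⟩
  have hcos : cos δ ≤ cos (t - φ) := by
    rw [← cos_abs (t - φ)]
    exact cos_le_cos_of_nonneg_of_le_pi (abs_nonneg _) hδπ hdist
  rw [exp_le_exp, mul_cos_add_mul_sin_eq_norm_mul_cos_sub_arg, mul_comm]
  exact mul_le_mul_of_nonneg_left hcos (norm_nonneg _)

lemma Z_pos (θ₁ θ₂ : ℝ) : 0 < Z θ₁ θ₂ :=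
  lt_of_lt_of_le (by positivity) (exp_cos_mul_norm_mul_le_Z pi_pos.le le_rfl θ₁ θ₂)

lemma log_mul_add_cos_mul_norm_le_log_Z {δ : ℝ} (hδ0 : 0 < δ) (hδπ : δ ≤ π) (θ₁ θ₂ : ℝ) :
    log (2 * δ) + cos δ * ‖(⟨θ₁, θ₂⟩ : ℂ)‖ ≤ log (Z θ₁ θ₂) := by
  have h := log_le_log (by positivity) (exp_cos_mul_norm_mul_le_Z hδ0.le hδπ θ₁ θ₂)
  rwa [log_mul (exp_pos _).ne' (by positivity), log_exp, add_comm] at h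

lemma continuous_Z : Continuous fun θ : ℝ × ℝ => Z θ.1 θ.2 :=
  continuous_parametric_intervalIntegral_of_continuous'
    (f := fun (θ : ℝ × ℝ) t => exp (θ.1 * cos t + θ.2 * sin t)) (μ := volume) (by fun_prop) _ _

lemma norm_le_norm_complex_mk (θ : ℝ × ℝ) : ‖θ‖ ≤ ‖(⟨θ.1, θ.2⟩ : ℂ)‖ :=
  max_le (Complex.abs_re_le_norm ⟨θ.1, θ.2⟩) (Complex.abs_im_le_norm ⟨θ.1, θ.2⟩)

theorem stmt_16 (cbar sbar : ℝ) (hcs : cbar ^ 2 + sbar ^ 2 < 1) :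
    Filter.Tendsto
        (fun θ : ℝ × ℝ => -cbar * θ.1 - sbar * θ.2 + Real.log (Z θ.1 θ.2))
        (Filter.cocompact (ℝ × ℝ)) Filter.atTop
      ∧ ∃ θmin : ℝ × ℝ, ∀ θ : ℝ × ℝ,
          -cbar * θmin.1 - sbar * θmin.2 + Real.log (Z θmin.1 θmin.2)
            ≤ -cbar * θ.1 - sbar * θ.2 + Real.log (Z θ.1 θ.2) := by
  obtain ⟨s, hs_eq, hs0, hs1⟩ : ∃ s, ‖(⟨cbar, sbar⟩ : ℂ)‖ = s ∧ 0 ≤ s ∧ s < 1 := by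
    refine ⟨_, rfl, norm_nonneg _, ?_⟩
    rw [← abs_norm, ← sq_lt_one_iff_abs_lt_one, Complex.sq_norm, Complex.normSq_mk]
    linarith
  -- any `δ ∈ (0, π]` with `s < cos δ` would do
  obtain ⟨δ, hδ0, hδπ, hcosδ⟩ : ∃ δ, 0 < δ ∧ δ ≤ π ∧ cos δ = (1 + s) / 2 :=
    ⟨_, arccos_pos.2 (by linarith), arccos_le_pi _, cos_arccos (by linarith) (by linarith)⟩
  have hcoercive : ∀ θ : ℝ × ℝ, log (2 * δ) + (1 - s) / 2 * ‖θ‖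
      ≤ -cbar * θ.1 - sbar * θ.2 + log (Z θ.1 θ.2) := fun θ => by
    have hlog := log_mul_add_cos_mul_norm_le_log_Z hδ0 hδπ θ.1 θ.2
    have hlin := mul_add_mul_le_norm_mul_norm cbar sbar θ.1 θ.2
    have hnorm := mul_le_mul_of_nonneg_left (norm_le_norm_complex_mk θ)
      (by linarith : 0 ≤ (1 - s) / 2)
    rw [hcosδ] at hlog
    rw [hs_eq] at hlin
    linarith
  have htend : Tendsto (fun θ : ℝ × ℝ => -cbar * θ.1 - sbar * θ.2 + log (Z θ.1 θ.2))
      (cocompact (ℝ × ℝ)) atTop :=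
    tendsto_atTop_mono hcoercive <| tendsto_atTop_add_const_left _ _ <|
      tendsto_norm_cocompact_atTop.const_mul_atTop (by linarith)
  have hlogZ := continuous_Z.log fun θ => (Z_pos θ.1 θ.2).ne'
  have hcont : Continuous fun θ : ℝ × ℝ => -cbar * θ.1 - sbar * θ.2 + log (Z θ.1 θ.2) := by
    fun_prop
  exact ⟨htend, hcont.exists_forall_le htend⟩
end
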